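/- arXiv:math/0606238 — 3 statements merged into one kernel-verified Lean document; each statement's English description precedes it below -/
import Mathlib

section
/- For 0 ≤ λ < 1 and θ > 0, the series ∑_{n=0}^∞ (θ + λn)^n / n! · e^{-θ - λn} converges to 1/(1 - λ). -/
/-!
With the Abel polynomials `A_n x = x (x + l n)^(n-1)` (`abelPoly`), put
`E x = ∑ A_n x e^(-l n) / n!` (`abelEGF`) and `G x = ∑ (x + l n)^n e^(-l n) / n!` (`powEGF`);
the series in question is `e^(-θ) G θ`. Abel's identity
`(x + y + l n)^n = ∑ C(n,k) A_k x (y + l (n-k))^(n-k)` shows that the `A_n` are of binomial type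
and that `G x = E x * G 0`, so `E` is multiplicative. Since `E x = 1 + x D x` (`abelSlope`) with
`D x → D 0` as `x → 0⁺`, the limit of `E x = E (x/m)^m` gives `E x = exp (δ x)` with `δ = D 0`.
Two index shifts give `E l = e^l δ` and `G 0 = 1 + l δ G 0`: the first says that `t = l δ` solves
`t e^(-t) = l e^(-l)`, the second that `l δ < 1`. As `t e^(-t)` is injective on `[0, 1]`, `δ = 1`,
so `E x = e^x`, `G 0 = 1 / (1 - l)`, and the series sums to `e^(-θ) e^θ / (1 - l)`.
-/

open Finset Real Filter Topology
open scoped Nat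

noncomputable def abelPoly (l x : ℝ) : ℕ → ℝ
  | 0 => 1
  | n + 1 => x * (x + l * (n + 1)) ^ n

noncomputable def abelSum (l x y : ℝ) (n : ℕ) : ℝ :=
  ∑ k ∈ range (n + 1), n.choose k * abelPoly l x k * (y + l * (n - k : ℕ)) ^ (n - k)

lemma abelPoly_eq_sub (l x : ℝ) (n : ℕ) :
    abelPoly l x n = (x + l * n) ^ n - l * (n * (x + l * n) ^ (n - 1)) := by
  cases n with
  | zero => simp [abelPoly]
  | succ n => simp only [abelPoly, Nat.cast_succ, add_tsub_cancel_right, pow_succ]; ring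

lemma abelPoly_mul_neg_pow {l x : ℝ} {n k : ℕ} (hk : k ≤ n + 1) :
    abelPoly l x k * (-(x + l * k)) ^ (n + 1 - k) =
      x * ((-1) ^ (n + 1 - k) * (x + l * k) ^ n) := by
  rw [neg_pow]
  cases k with
  | zero => simp only [abelPoly, Nat.sub_zero, CharP.cast_eq_zero]; ring
  | succ k =>
    obtain ⟨m, rfl⟩ : ∃ m, n = k + m := ⟨n - k, by omega⟩
    simp only [abelPoly, show k + m + 1 - (k + 1) = m by omega, pow_add]
    push_cast
    ring

lemma abelPoly_nonneg {l x : ℝ} (hl : 0 ≤ l) (hx : 0 ≤ x) (n : ℕ) : 0 ≤ abelPoly l x n := by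
  cases n <;> simp only [abelPoly] <;> positivity

lemma abelPoly_le_pow {l x : ℝ} (hl : 0 ≤ l) (hx : 0 ≤ x) (n : ℕ) :
    abelPoly l x n ≤ (x + l * n) ^ n := by
  cases n with
  | zero => simp [abelPoly]
  | succ n =>
    rw [abelPoly, pow_succ', Nat.cast_succ]
    gcongr
    nlinarith

lemma abelPoly_self_mul (l : ℝ) (n : ℕ) : abelPoly l l n * (n + 1) = (l * (n + 1)) ^ n := by
  cases n with
  | zero => simp [abelPoly]
  | succ n => simp only [abelPoly, Nat.cast_succ, pow_succ]; ring

open Polynomial in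
lemma sum_neg_one_pow_mul_choose_mul_pow_eq_zero {n j : ℕ} (hj : j < n) (x l : ℝ) :
    ∑ k ∈ range (n + 1), (-1) ^ (n - k) * n.choose k * (x + l * k) ^ j = 0 := by
  have hlin : (C l * X + C x : ℝ[X]).natDegree ≤ 1 := natDegree_linear_le
  have hdeg : ((C l * X + C x) ^ j : ℝ[X]).natDegree < n :=
    natDegree_pow_le.trans_lt (by nlinarith)
  have h := congr_fun (fwdDiff_iter_eq_zero_of_degree_lt hdeg) 0
  rw [fwdDiff_iter_eq_sum_shift] at h
  simp only [eval_pow, eval_add, eval_mul, eval_C, eval_X, zero_add, nsmul_eq_mul, mul_one,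
    Pi.zero_apply, zsmul_eq_mul] at h
  rw [← h]
  refine sum_congr rfl fun k _ => ?_
  push_cast
  ring

lemma hasDerivAt_abelSum (l x y : ℝ) (n : ℕ) :
    HasDerivAt (fun y => abelSum l x y n) (∑ k ∈ range (n + 1),
      n.choose k * abelPoly l x k * ((n - k : ℕ) * (y + l * (n - k : ℕ)) ^ (n - k - 1))) y := by
  refine HasDerivAt.fun_sum fun k _ => HasDerivAt.const_mul _ ?_
  simpa using ((hasDerivAt_id' y).add_const (l * (n - k : ℕ))).fun_pow (n - k)

lemma sum_choose_mul_abelPoly_mul_deriv (l x y : ℝ) (n : ℕ) :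
    ∑ k ∈ range (n + 2), (n + 1).choose k * abelPoly l x k *
      ((n + 1 - k : ℕ) * (y + l * (n + 1 - k : ℕ)) ^ (n + 1 - k - 1)) =
      (n + 1) * abelSum l x (y + l) n := by
  rw [sum_range_succ, abelSum, mul_sum]
  simp only [Nat.sub_self, CharP.cast_eq_zero, zero_mul, mul_zero, add_zero]
  refine sum_congr rfl fun k hk => ?_
  have hk : k ≤ n := Nat.lt_succ_iff.mp (mem_range.mp hk)
  have hchoose : ((n - k : ℕ) + 1 : ℝ) * (n + 1).choose k = (n + 1) * n.choose k := by
    have h := Nat.choose_mul_succ_eq n k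
    rw [show n + 1 - k = n - k + 1 by omega] at h
    exact_mod_cast by linarith
  rw [show n + 1 - k = n - k + 1 by omega, Nat.add_sub_cancel]
  push_cast
  linear_combination (abelPoly l x k * (y + l + l * (n - k : ℕ)) ^ (n - k)) * hchoose

lemma abelSum_neg_sub_eq_zero (l x : ℝ) (n : ℕ) :
    abelSum l x (-x - l * (n + 1 : ℕ)) (n + 1) = 0 := by
  have hterm : ∀ k ∈ range (n + 2), ((n + 1).choose k : ℝ) * abelPoly l x k *
      (-x - l * (n + 1 : ℕ) + l * (n + 1 - k : ℕ)) ^ (n + 1 - k) =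
      x * ((-1) ^ (n + 1 - k) * (n + 1).choose k * (x + l * k) ^ n) := fun k hk => by
    have hk : k ≤ n + 1 := Nat.lt_succ_iff.mp (mem_range.mp hk)
    rw [show -x - l * (n + 1 : ℕ) + l * (n + 1 - k : ℕ) = -(x + l * k) by
      push_cast [Nat.cast_sub hk]; ring]
    linear_combination ((n + 1).choose k : ℝ) * abelPoly_mul_neg_pow (l := l) (x := x) hk
  rw [abelSum, sum_congr rfl hterm, ← mul_sum,
    sum_neg_one_pow_mul_choose_mul_pow_eq_zero n.lt_succ_self, mul_zero]

theorem abelSum_eq (l x y : ℝ) (n : ℕ) : abelSum l x y n = (x + y + l * n) ^ n := by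
  induction n generalizing y with
  | zero => simp [abelSum, abelPoly]
  | succ n ih =>
    have hderiv (y : ℝ) : HasDerivAt (fun y => abelSum l x y (n + 1))
        ((n + 1 : ℕ) * (x + y + l * (n + 1 : ℕ)) ^ n * 1) y := by
      convert hasDerivAt_abelSum l x y (n + 1) using 1
      rw [sum_choose_mul_abelPoly_mul_deriv, ih]
      push_cast
      ring
    have hpow (y : ℝ) : HasDerivAt (fun y => (x + y + l * (n + 1 : ℕ)) ^ (n + 1))
        ((n + 1 : ℕ) * (x + y + l * (n + 1 : ℕ)) ^ n * 1) y := by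
      simpa using ((hasDerivAt_id' y).const_add x |>.add_const _).fun_pow (n + 1)
    have h := eq_of_fderiv_eq (𝕜 := ℝ) (fun y => (hderiv y).differentiableAt)
      (fun y => (hpow y).differentiableAt)
      (fun y => (hderiv y).hasFDerivAt.fderiv.trans (hpow y).hasFDerivAt.fderiv.symm)
      (-x - l * (n + 1 : ℕ)) (by rw [abelSum_neg_sub_eq_zero]; ring)
    exact congr_fun h y

-- `abelPoly l y m = (y + l m)^m - l ∂_y (y + l m)^m`, so the convolution is
-- `abelSum` minus `l` times its `y`-derivative.
theorem abelPoly_add (l x y : ℝ) (n : ℕ) :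
    abelPoly l (x + y) n =
      ∑ k ∈ range (n + 1), n.choose k * abelPoly l x k * abelPoly l y (n - k) := by
  have hderiv : HasDerivAt (fun y => abelSum l x y n) (n * (x + y + l * n) ^ (n - 1) * 1) y := by
    simp_rw [abelSum_eq]
    exact ((hasDerivAt_id' y).const_add x |>.add_const _).fun_pow n
  have hsum := (hasDerivAt_abelSum l x y n).unique hderiv
  calc abelPoly l (x + y) n = (x + y + l * n) ^ n - l * (n * (x + y + l * n) ^ (n - 1)) :=
        abelPoly_eq_sub l (x + y) n
    _ = abelSum l x y n - l * ∑ k ∈ range (n + 1), n.choose k * abelPoly l x k *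
          ((n - k : ℕ) * (y + l * (n - k : ℕ)) ^ (n - k - 1)) := by
        rw [abelSum_eq, hsum, mul_one, add_assoc]
    _ = _ := by
        rw [abelSum, mul_sum, ← sum_sub_distrib]
        refine sum_congr rfl fun k _ => ?_
        rw [abelPoly_eq_sub l y (n - k)]
        ring

lemma tsum_mul_tsum_eq_tsum_of_binomial_conv {a b c : ℕ → ℝ} {r : ℝ}
    (ha : Summable fun n => ‖a n / n ! * r ^ n‖) (hb : Summable fun n => ‖b n / n ! * r ^ n‖)
    (hc : ∀ n, ∑ k ∈ range (n + 1), n.choose k * a k * b (n - k) = c n) :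
    (∑' n, a n / n ! * r ^ n) * (∑' n, b n / n ! * r ^ n) = ∑' n, c n / n ! * r ^ n := by
  rw [tsum_mul_tsum_eq_tsum_sum_range_of_summable_norm ha hb]
  refine tsum_congr fun n => ?_
  rw [← hc, sum_div, sum_mul]
  refine sum_congr rfl fun k hk => ?_
  have hk : k ≤ n := Nat.lt_succ_iff.mp (mem_range.mp hk)
  rw [Nat.cast_choose ℝ hk, ← pow_mul_pow_sub r hk]
  field_simp

lemma strictMonoOn_mul_exp_neg : StrictMonoOn (fun x : ℝ => x * exp (-x)) (Set.Icc 0 1) := by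
  rintro x ⟨hx0, -⟩ y ⟨-, hy1⟩ hxy
  have hexp := add_one_lt_exp (x := x - y) (by linarith)
  calc x * exp (-x) ≤ y * (x - y + 1) * exp (-x) := by gcongr; nlinarith
    _ < y * exp (x - y) * exp (-x) := by gcongr; linarith
    _ = y * exp (-y) := by rw [mul_assoc, ← exp_add]; ring_nf

noncomputable def abelEGF (l x : ℝ) : ℝ := ∑' n : ℕ, abelPoly l x n / n ! * exp (-l) ^ n

noncomputable def powEGF (l x : ℝ) : ℝ := ∑' n : ℕ, (x + l * n) ^ n / n ! * exp (-l) ^ n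

noncomputable def abelSlope (l x : ℝ) : ℝ :=
  ∑' n : ℕ, (x + l * (n + 1)) ^ n / (n + 1)! * exp (-l) ^ (n + 1)

section Series

variable {l x : ℝ}

lemma add_mul_pow_div_factorial_le (hl : 0 < l) (hx : 0 ≤ x) (n : ℕ) :
    (x + l * n) ^ n / n ! ≤ exp (x / l) * (l * exp 1) ^ n := by
  have h := pow_div_factorial_le_exp (x := (x + l * n) / l) (by positivity) n
  have he : exp ((x + l * n) / l) = exp (x / l) * exp 1 ^ n := by
    rw [← exp_nat_mul, ← exp_add]
    field_simp
  calc (x + l * n) ^ n / n ! = l ^ n * (((x + l * n) / l) ^ n / n !) := by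
        rw [div_pow]; field_simp
    _ ≤ l ^ n * (exp (x / l) * exp 1 ^ n) := by rw [← he]; gcongr
    _ = _ := by ring

lemma mul_exp_one_mul_exp_neg_lt_one (hl1 : l < 1) : l * exp 1 * exp (-l) < 1 := by
  have := add_one_lt_exp (x := l - 1) (by linarith)
  rw [mul_assoc, ← exp_add, show 1 + -l = -(l - 1) by ring, exp_neg, ← div_eq_mul_inv,
    div_lt_one (exp_pos _)]
  linarith

lemma summable_add_mul_pow_div_factorial (hl : 0 < l) (hl1 : l < 1) (hx : 0 ≤ x) :
    Summable fun n : ℕ => (x + l * n) ^ n / n ! * exp (-l) ^ n := by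
  refine Summable.of_nonneg_of_le (fun n => by positivity) (fun n => ?_)
    ((summable_geometric_of_lt_one (by positivity) (mul_exp_one_mul_exp_neg_lt_one hl1)).mul_left
      (exp (x / l)))
  rw [mul_pow, ← mul_assoc]
  gcongr
  exact add_mul_pow_div_factorial_le hl hx n

lemma summable_abelEGF (hl : 0 < l) (hl1 : l < 1) (hx : 0 ≤ x) :
    Summable fun n : ℕ => abelPoly l x n / n ! * exp (-l) ^ n := by
  refine (summable_add_mul_pow_div_factorial hl hl1 hx).of_nonneg_of_le
    (fun n => by have := abelPoly_nonneg hl.le hx n; positivity) (fun n => ?_)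
  gcongr
  exact abelPoly_le_pow hl.le hx n

lemma summable_abelSlope (hl : 0 < l) (hl1 : l < 1) (hx : 0 ≤ x) :
    Summable fun n : ℕ => (x + l * (n + 1)) ^ n / (n + 1)! * exp (-l) ^ (n + 1) := by
  refine Summable.of_nonneg_of_le (fun n => by positivity) (fun n => ?_)
    (((summable_nat_add_iff 1).mpr (summable_add_mul_pow_div_factorial hl hl1 hx)).mul_left l⁻¹)
  have h : l * (x + l * (n + 1)) ^ n ≤ (x + l * (n + 1)) ^ (n + 1) := by
    rw [pow_succ']
    gcongr
    nlinarith [n.cast_nonneg (α := ℝ)]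
  calc _ = l⁻¹ * (l * (x + l * (n + 1)) ^ n / (n + 1)! * exp (-l) ^ (n + 1)) := by
        field_simp
    _ ≤ _ := by push_cast; gcongr

lemma abelEGF_eq_one_add (hl : 0 < l) (hl1 : l < 1) (hx : 0 ≤ x) :
    abelEGF l x = 1 + x * abelSlope l x := by
  rw [abelEGF, (summable_abelEGF hl hl1 hx).tsum_eq_zero_add, abelSlope, ← tsum_mul_left]
  simp only [abelPoly]
  simp [mul_assoc, mul_div_assoc]

lemma abelEGF_zero (hl : 0 < l) (hl1 : l < 1) : abelEGF l 0 = 1 := by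
  simpa using abelEGF_eq_one_add hl hl1 le_rfl

lemma abelEGF_add (hl : 0 < l) (hl1 : l < 1) {y : ℝ} (hx : 0 ≤ x) (hy : 0 ≤ y) :
    abelEGF l (x + y) = abelEGF l x * abelEGF l y :=
  (tsum_mul_tsum_eq_tsum_of_binomial_conv (summable_norm_iff.mpr (summable_abelEGF hl hl1 hx))
    (summable_norm_iff.mpr (summable_abelEGF hl hl1 hy)) fun n => (abelPoly_add l x y n).symm).symm

lemma abelEGF_natCast_mul (hl : 0 < l) (hl1 : l < 1) (hx : 0 ≤ x) (m : ℕ) :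
    abelEGF l (m * x) = abelEGF l x ^ m := by
  induction m with
  | zero => simpa using abelEGF_zero hl hl1
  | succ m ih =>
    rw [Nat.cast_succ, add_one_mul, abelEGF_add hl hl1 (by positivity) hx, ih, pow_succ]

lemma abelEGF_self : abelEGF l l = exp l * abelSlope l 0 := by
  rw [abelEGF, abelSlope, ← tsum_mul_left]
  refine tsum_congr fun n => ?_
  rw [zero_add, ← abelPoly_self_mul, pow_succ, Nat.factorial_succ, exp_neg]
  push_cast
  field_simp

lemma abelSlope_zero_le (hl : 0 < l) (hl1 : l < 1) (hx : 0 ≤ x) :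
    abelSlope l 0 ≤ abelSlope l x := by
  refine (summable_abelSlope hl hl1 le_rfl).tsum_le_tsum (fun n => ?_)
    (summable_abelSlope hl hl1 hx)
  gcongr

lemma add_mul_succ_pow_le (hl : 0 < l) (hx : 0 ≤ x) (n : ℕ) :
    (x + l * (n + 1)) ^ n ≤ exp (x / l) * (l * (n + 1)) ^ n := by
  set L := l * (n + 1) with hL
  have hL0 : 0 < L := by positivity
  have hxL : x + L ≤ L * exp (x / L) := by
    have := add_one_le_exp (x / L)
    rw [div_add_one hL0.ne', div_le_iff₀ hL0] at this
    linarith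
  calc (x + L) ^ n ≤ (L * exp (x / L)) ^ n := by gcongr
    _ = exp (n * (x / L)) * L ^ n := by rw [mul_pow, exp_nat_mul]; ring
    _ ≤ exp (x / l) * L ^ n := by
        gcongr
        rw [hL, ← div_div, mul_div_assoc', div_le_iff₀ (by positivity)]
        nlinarith [div_nonneg hx hl.le]

lemma abelSlope_le (hl : 0 < l) (hl1 : l < 1) (hx : 0 ≤ x) :
    abelSlope l x ≤ exp (x / l) * abelSlope l 0 := by
  rw [abelSlope, abelSlope, ← tsum_mul_left]
  refine (summable_abelSlope hl hl1 hx).tsum_le_tsum (fun n => ?_)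
    ((summable_abelSlope hl hl1 le_rfl).mul_left _)
  calc _ ≤ exp (x / l) * (l * (n + 1)) ^ n / (n + 1)! * exp (-l) ^ (n + 1) := by
        gcongr
        exact add_mul_succ_pow_le hl hx n
    _ = _ := by ring

lemma tendsto_abelSlope (hl : 0 < l) (hl1 : l < 1) (hx : 0 ≤ x) :
    Tendsto (fun m : ℕ => abelSlope l (x / m)) atTop (𝓝 (abelSlope l 0)) := by
  have h0 : Tendsto (fun m : ℕ => x / m / l) atTop (𝓝 0) := by
    simpa using (tendsto_const_div_atTop_nhds_zero_nat x).div_const l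
  have hexp : Tendsto (fun m : ℕ => exp (x / m / l) * abelSlope l 0) atTop
      (𝓝 (abelSlope l 0)) := by
    simpa using ((continuous_exp.tendsto 0).comp h0).mul_const (abelSlope l 0)
  exact tendsto_of_tendsto_of_tendsto_of_le_of_le tendsto_const_nhds hexp
    (fun m => abelSlope_zero_le hl hl1 (by positivity))
    (fun m => abelSlope_le hl hl1 (by positivity))

theorem abelEGF_eq_exp (hl : 0 < l) (hl1 : l < 1) (hx : 0 ≤ x) :
    abelEGF l x = exp (x * abelSlope l 0) := by
  have hlim : Tendsto (fun m : ℕ => (1 + x / m * abelSlope l (x / m)) ^ m) atTop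
      (𝓝 (exp (x * abelSlope l 0))) := by
    refine Real.tendsto_one_add_pow_exp_of_tendsto
      (((tendsto_abelSlope hl hl1 hx).const_mul x).congr' ?_)
    filter_upwards [eventually_ne_atTop 0] with m hm
    field_simp
  refine tendsto_nhds_unique (tendsto_const_nhds.congr' ?_) hlim
  filter_upwards [eventually_ne_atTop 0] with m hm
  rw [← abelEGF_eq_one_add hl hl1 (by positivity), ← abelEGF_natCast_mul hl hl1 (by positivity),
    mul_div_cancel₀ x (Nat.cast_ne_zero.mpr hm)]

lemma powEGF_eq_abelEGF_mul (hl : 0 < l) (hl1 : l < 1) (hx : 0 ≤ x) :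
    powEGF l x = abelEGF l x * powEGF l 0 :=
  (tsum_mul_tsum_eq_tsum_of_binomial_conv (summable_norm_iff.mpr (summable_abelEGF hl hl1 hx))
    (summable_norm_iff.mpr (summable_add_mul_pow_div_factorial hl hl1 le_rfl))
    fun n => by rw [← abelSum, abelSum_eq, add_zero]).symm

lemma powEGF_zero_eq (hl : 0 < l) (hl1 : l < 1) :
    powEGF l 0 = 1 + l * abelSlope l 0 * powEGF l 0 := by
  have hshift : powEGF l 0 = 1 + l * exp (-l) * powEGF l l := by
    rw [powEGF, (summable_add_mul_pow_div_factorial hl hl1 le_rfl).tsum_eq_zero_add, powEGF,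
      ← tsum_mul_left]
    congr 1
    · simp
    refine tsum_congr fun n => ?_
    rw [Nat.factorial_succ]
    push_cast
    field_simp
    ring
  conv_lhs => rw [hshift, powEGF_eq_abelEGF_mul hl hl1 hl.le, abelEGF_self, exp_neg]
  field_simp

theorem abelSlope_zero_eq_one (hl : 0 < l) (hl1 : l < 1) : abelSlope l 0 = 1 := by
  set δ := abelSlope l 0
  have hδ : 0 ≤ δ := tsum_nonneg fun n => by positivity
  have hG0 : 0 ≤ powEGF l 0 := tsum_nonneg fun n => by positivity
  have hself : exp (l * δ) = exp l * δ := (abelEGF_eq_exp hl hl1 hl.le).symm.trans abelEGF_self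
  have hlt : l * δ < 1 := by
    nlinarith [powEGF_zero_eq hl hl1, mul_nonneg (mul_nonneg hl.le hδ) hG0]
  have hδ0 : δ ≠ 0 := by
    rintro h
    simp [h] at hself
  have hfix : l * δ * exp (-(l * δ)) = l * exp (-l) := by
    rw [exp_neg, exp_neg, hself]
    field_simp
  exact (mul_eq_left₀ hl.ne').mp
    (strictMonoOn_mul_exp_neg.injOn ⟨by positivity, hlt.le⟩ ⟨hl.le, hl1.le⟩ hfix)

theorem powEGF_eq (hl : 0 < l) (hl1 : l < 1) (hx : 0 ≤ x) : powEGF l x = exp x / (1 - l) := by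
  have hG := powEGF_zero_eq hl hl1
  rw [abelSlope_zero_eq_one hl hl1] at hG
  rw [powEGF_eq_abelEGF_mul hl hl1 hx, abelEGF_eq_exp hl hl1 hx, abelSlope_zero_eq_one hl hl1,
    mul_one, eq_div_iff (sub_ne_zero.mpr hl1.ne')]
  linear_combination exp x * hG

end Series

theorem gpd_sum_eq_one_div (θ l : ℝ) (hθ : 0 < θ) (hl0 : 0 ≤ l) (hl1 : l < 1) :
    HasSum (fun n : ℕ => (θ + l * n) ^ n / n.factorial * Real.exp (-θ - l * n))
      (1 / (1 - l)) := by
  have hterm (n : ℕ) : (θ + l * n) ^ n / n.factorial * exp (-θ - l * n) =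
      exp (-θ) * ((θ + l * n) ^ n / n ! * exp (-l) ^ n) := by
    rw [← exp_nat_mul, show -θ - l * n = -θ + n * -l by ring, exp_add]
    ring
  simp_rw [hterm]
  rcases hl0.eq_or_lt with rfl | hl
  · have h := (NormedSpace.expSeries_div_hasSum_exp θ).mul_left (exp (-θ))
    rw [← Real.exp_eq_exp_ℝ, ← exp_add, neg_add_cancel, exp_zero] at h
    simpa using h
  · have h := (summable_add_mul_pow_div_factorial hl hl1 hθ.le).hasSum.mul_left (exp (-θ))
    rwa [← powEGF, powEGF_eq hl hl1 hθ.le, mul_div_assoc', ← exp_add, neg_add_cancel,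
      exp_zero] at h
end

section
/- If |λ| < λ₀, where λ₀ is the unique positive real solution of λ e^λ = e^{-1}, then the double series ∑_{n=0}^∞ ∑_{k=n}^∞ (θ + λn)^k / (n! (k-n)!) with absolute values of summands converges; in particular ∑_{n=0}^∞ |θ + λn|^n / n! · e^{|θ + λn|} < ∞. -/
theorem abs_convergence_double_series (θ l l₀ : ℝ) (hl₀ : 0 < l₀)
    (hl₀eq : l₀ * Real.exp l₀ = Real.exp (-1)) (hl : |l| < l₀) :
    Summable (fun p : ℕ × ℕ =>
      |θ + l * p.1| ^ (p.1 + p.2) / (p.1.factorial * p.2.factorial)) ∧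
    Summable (fun n : ℕ => |θ + l * n| ^ n / n.factorial * Real.exp |θ + l * n|) := by
  set a := |l| with ha
  set c := |θ| with hc
  have ha0 : 0 ≤ a := abs_nonneg l
  have hc0 : 0 ≤ c := abs_nonneg θ
  have hx : ∀ n : ℕ, |θ + l * n| ≤ c + a * n := by
    intro n
    calc |θ + l * n| ≤ |θ| + |l * n| := abs_add_le _ _
      _ = c + a * n := by rw [abs_mul, Nat.abs_cast]
  -- second summability
  have h2 : Summable (fun n : ℕ => |θ + l * n| ^ n / n.factorial * Real.exp |θ + l * n|) := by
    rcases eq_or_lt_of_le ha0 with h | hapos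
    · have hl0 : l = 0 := abs_eq_zero.mp h.symm
      subst hl0
      simp only [zero_mul, add_zero]
      exact (Real.summable_pow_div_factorial |θ|).mul_right _
    · have hr0 : 0 ≤ a * Real.exp (1 + a) := by positivity
      have hr1 : a * Real.exp (1 + a) < 1 := by
        have h1 : a * Real.exp a < Real.exp (-1) := by
          rw [← hl₀eq]
          calc a * Real.exp a ≤ a * Real.exp l₀ := by
                have := Real.exp_le_exp.mpr hl.le
                exact mul_le_mul_of_nonneg_left this ha0
            _ < l₀ * Real.exp l₀ :=
                mul_lt_mul_of_pos_right hl (Real.exp_pos _)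
        calc a * Real.exp (1 + a) = (a * Real.exp a) * Real.exp 1 := by
              rw [add_comm, Real.exp_add]; ring
          _ < Real.exp (-1) * Real.exp 1 :=
              mul_lt_mul_of_pos_right h1 (Real.exp_pos _)
          _ = 1 := by rw [← Real.exp_add]; simp
      have key : ∀ n : ℕ, |θ + l * n| ^ n / n.factorial * Real.exp |θ + l * n| ≤
          Real.exp (c + c / a) * (a * Real.exp (1 + a)) ^ n := by
        intro n
        rcases Nat.eq_zero_or_pos n with rfl | hn
        · simp only [pow_zero, Nat.factorial_zero, Nat.cast_one, div_one, one_mul, mul_one,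
            Nat.cast_zero, mul_zero, add_zero]
          have : Real.exp c ≤ Real.exp (c + c / a) :=
            Real.exp_le_exp.mpr (by nlinarith [div_nonneg hc0 ha0])
          calc Real.exp |θ| ≤ Real.exp c := le_of_eq rfl
            _ ≤ _ := this
        · set x : ℝ := (n : ℝ) with hxdef
          have hx1 : 1 ≤ x := by exact_mod_cast Nat.one_le_cast.mpr hn
          have hx0 : 0 < x := lt_of_lt_of_le one_pos hx1
          have hfac : (0:ℝ) < n.factorial := by positivity
          -- (c + a*x) ≤ a*x * exp (c/(a*x))
          have hA : c + a * x ≤ a * x * Real.exp (c / (a * x)) := by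
            have h1 : c / (a * x) + 1 ≤ Real.exp (c / (a * x)) :=
              Real.add_one_le_exp _
            have : a * x * (c / (a * x) + 1) = c + a * x := by
              field_simp
            rw [← this]
            exact mul_le_mul_of_nonneg_left h1 (by positivity)
          have hApow : (c + a * x) ^ n ≤ Real.exp (c / a) * (a * x) ^ n := by
            have h2 : (c + a * x) ^ n ≤ (a * x * Real.exp (c / (a * x))) ^ n :=
              pow_le_pow_left₀ (by positivity) hA n
            have h3 : (a * x * Real.exp (c / (a * x))) ^ n =
                (a * x) ^ n * Real.exp (c / (a * x)) ^ n := mul_pow _ _ _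
            have h4 : Real.exp (c / (a * x)) ^ n = Real.exp (c / a) := by
              rw [← Real.exp_nat_mul]
              congr 1
              rw [hxdef]
              field_simp
            calc (c + a * x) ^ n ≤ _ := h2
              _ = Real.exp (c / a) * (a * x) ^ n := by rw [h3, h4]; ring
          -- x^n / n! ≤ exp x
          have hB : x ^ n / n.factorial ≤ Real.exp x := by
            have := Real.sum_le_exp_of_nonneg (le_of_lt hx0) (n + 1)
            refine le_trans ?_ this
            have hmem : n ∈ Finset.range (n + 1) := Finset.self_mem_range_succ n
            exact Finset.single_le_sum (f := fun i => x ^ i / i.factorial)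
              (fun i _ => by positivity) hmem
          have hexpmono : Real.exp |θ + l * n| ≤ Real.exp (c + a * x) :=
            Real.exp_le_exp.mpr (hx n)
          calc |θ + l * n| ^ n / n.factorial * Real.exp |θ + l * n|
              ≤ (c + a * x) ^ n / n.factorial * Real.exp (c + a * x) := by
                gcongr
                exact hx n
            _ ≤ (Real.exp (c / a) * (a * x) ^ n) / n.factorial * Real.exp (c + a * x) := by
                gcongr
            _ = Real.exp (c / a) * a ^ n * (x ^ n / n.factorial) * Real.exp (c + a * x) := by
                rw [mul_pow]; ring
            _ ≤ Real.exp (c / a) * a ^ n * Real.exp x * Real.exp (c + a * x) :=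
                mul_le_mul_of_nonneg_right
                  (mul_le_mul_of_nonneg_left hB (by positivity))
                  (Real.exp_pos _).le
            _ = a ^ n * Real.exp (c / a + x + (c + a * x)) := by
                simp only [Real.exp_add]; ring
            _ = Real.exp (c + c / a) * (a * Real.exp (1 + a)) ^ n := by
                rw [mul_pow, ← Real.exp_nat_mul, ← hxdef,
                  show x * (1 + a) = x + a * x from by ring,
                  show c / a + x + (c + a * x) = (c + c / a) + (x + a * x) from by ring]
                simp only [Real.exp_add]; ring
      exact Summable.of_nonneg_of_le (fun n => by positivity) key
        (((summable_geometric_of_lt_one hr0 hr1).mul_left _))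
  refine ⟨?_, h2⟩
  have hfac : ∀ p : ℕ × ℕ, |θ + l * p.1| ^ (p.1 + p.2) /
      ((p.1.factorial : ℝ) * p.2.factorial) =
      (|θ + l * p.1| ^ p.1 / p.1.factorial) * (|θ + l * p.1| ^ p.2 / p.2.factorial) := by
    intro p
    rw [pow_add]
    field_simp
  rw [summable_prod_of_nonneg (fun p => by positivity)]
  constructor
  · intro n
    refine Summable.congr ((Real.summable_pow_div_factorial |θ + l * n|).mul_left
      (|θ + l * n| ^ n / n.factorial)) ?_
    intro k
    exact (hfac (n, k)).symm
  · refine Summable.congr h2 ?_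
    intro n
    have htsum : ∑' k : ℕ, |θ + l * n| ^ k / k.factorial = Real.exp |θ + l * n| := by
      rw [Real.exp_eq_exp_ℝ, NormedSpace.exp_eq_tsum_div]
    calc |θ + l * n| ^ n / n.factorial * Real.exp |θ + l * n|
        = |θ + l * n| ^ n / n.factorial * ∑' k : ℕ, |θ + l * n| ^ k / k.factorial := by
          rw [htsum]
      _ = ∑' k : ℕ, |θ + l * n| ^ n / n.factorial * (|θ + l * n| ^ k / k.factorial) := by
          rw [tsum_mul_left]
      _ = ∑' k : ℕ, |θ + l * n| ^ (n + k) / (n.factorial * k.factorial) := by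
          exact tsum_congr fun k => (hfac (n, k)).symm
end

section
/- For θ > 0 and 0 ≤ λ < 1, the identity ∑_{n=0}^∞ P_n(θ, λ) = S(θ, λ) − λ S(θ + λ, λ) holds, where P_n(θ, λ) = θ(θ+nλ)^{n-1}/n! · e^{-θ-nλ} and S(θ, λ) = ∑_{n=0}^∞ (θ+λn)^n/n! · e^{-θ-λn}. -/
lemma pow_div_factorial_le_exp (x : ℝ) (hx : 0 ≤ x) (n : ℕ) :
    x ^ n / n.factorial ≤ Real.exp x := by
  calc x ^ n / n.factorial
      ≤ ∑ i ∈ Finset.range (n + 1), x ^ i / i.factorial := by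
        have h : ∀ i ∈ Finset.range (n + 1), 0 ≤ x ^ i / (i.factorial : ℝ) :=
          fun i _ => by positivity
        exact Finset.single_le_sum h (Finset.self_mem_range_succ n)
    _ ≤ Real.exp x := Real.sum_le_exp_of_nonneg hx _

lemma summable_S (θ l : ℝ) (hθ : 0 < θ) (hl0 : 0 ≤ l) (hl1 : l < 1) :
    Summable (fun n : ℕ => (θ + l * n) ^ n / n.factorial * Real.exp (-θ - l * n)) := by
  set c := l * Real.exp (1 - l) with hc_def
  have hc0 : 0 ≤ c := by positivity
  have hc : c < 1 := by
    rcases eq_or_lt_of_le hl0 with h | h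
    · simp [hc_def, ← h]
    · have hlog : Real.log l < l - 1 := Real.log_lt_sub_one_of_pos h (ne_of_lt hl1)
      have : c = Real.exp (Real.log l + (1 - l)) := by
        rw [Real.exp_add, Real.exp_log h]
      rw [this]
      calc Real.exp (Real.log l + (1 - l)) < Real.exp 0 := by
            apply Real.exp_lt_exp.mpr; linarith
        _ = 1 := Real.exp_zero
  set ρ := (c + 1) / 2 with hρ_def
  have hρ0 : 0 < ρ := by positivity
  have hρ1 : ρ < 1 := by simp only [hρ_def]; linarith
  have hcρ : c < ρ := by simp only [hρ_def]; linarith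
  set δ := ρ * Real.exp (l - 1) - l with hδ_def
  have hδ : 0 < δ := by
    have : c * Real.exp (l - 1) < ρ * Real.exp (l - 1) := by
      exact mul_lt_mul_of_pos_right hcρ (Real.exp_pos _)
    have hce : c * Real.exp (l - 1) = l := by
      rw [hc_def, mul_assoc, ← Real.exp_add]
      norm_num
    simp only [hδ_def]
    linarith [this, hce]
  obtain ⟨N, hN⟩ := exists_nat_gt (θ / δ)
  -- key bound for n ≥ N + 1
  have key : ∀ n : ℕ, N + 1 ≤ n →
      (θ + l * n) ^ n / n.factorial * Real.exp (-θ - l * n) ≤ Real.exp (-θ) * ρ ^ n := by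
    intro n hn
    have hn1 : (1 : ℝ) ≤ n := by exact_mod_cast Nat.one_le_iff_ne_zero.mpr (by omega)
    have hnN : (θ / δ : ℝ) ≤ n := by
      have : (N : ℝ) ≤ n := by exact_mod_cast Nat.le_of_succ_le hn
      linarith
    have hθn : θ ≤ δ * n := by
      rw [div_le_iff₀ hδ] at hnN
      linarith [hnN]
    have h1 : θ + l * n ≤ ρ * Real.exp (l - 1) * n := by
      have : ρ * Real.exp (l - 1) * n = (δ + l) * n := by rw [hδ_def]; ring
      rw [this]
      nlinarith
    have hbase : 0 ≤ θ + l * n := by positivity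
    have h2 : (θ + l * n) ^ n ≤ (ρ * Real.exp (l - 1) * n) ^ n :=
      pow_le_pow_left₀ hbase h1 n
    have h3 : (n : ℝ) ^ n ≤ n.factorial * Real.exp n := by
      have := pow_div_factorial_le_exp (n : ℝ) (by positivity) n
      rw [div_le_iff₀ (by positivity : (0:ℝ) < n.factorial)] at this
      linarith [this]
    have hfact : (0 : ℝ) < n.factorial := by positivity
    have h4 : (ρ * Real.exp (l - 1) * n) ^ n = ρ ^ n * Real.exp ((l - 1) * n) * (n : ℝ) ^ n := by
      rw [mul_pow, mul_pow, mul_comm (l-1) (n:ℝ), Real.exp_nat_mul]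
    calc (θ + l * n) ^ n / n.factorial * Real.exp (-θ - l * n)
        ≤ (ρ * Real.exp (l - 1) * n) ^ n / n.factorial * Real.exp (-θ - l * n) := by
          gcongr
      _ = ρ ^ n * Real.exp ((l - 1) * n) * (n : ℝ) ^ n / n.factorial * Real.exp (-θ - l * n) := by
          rw [h4]
      _ ≤ ρ ^ n * Real.exp ((l - 1) * n) * (n.factorial * Real.exp n) / n.factorial
            * Real.exp (-θ - l * n) := by gcongr
      _ = ρ ^ n * (Real.exp ((l - 1) * n) * Real.exp n * Real.exp (-θ - l * n)) := by
          field_simp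
      _ = Real.exp (-θ) * ρ ^ n := by
          rw [← Real.exp_add, ← Real.exp_add,
            show (l - 1) * (n:ℝ) + n + (-θ - l * n) = -θ by ring]
          ring
  -- summability via comparison shifted by N + 1
  have hgeom : Summable (fun n : ℕ => Real.exp (-θ) * ρ ^ (N + 1) * ρ ^ n) :=
    (summable_geometric_of_lt_one hρ0.le hρ1).mul_left _
  have hshift : Summable (fun n : ℕ =>
      (θ + l * (n + (N+1) : ℕ)) ^ (n + (N+1)) / (n + (N+1)).factorial
        * Real.exp (-θ - l * (n + (N+1) : ℕ))) := by
    apply Summable.of_nonneg_of_le (f := fun n : ℕ => Real.exp (-θ) * ρ ^ (N + 1) * ρ ^ n)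
    · intro n; positivity
    · intro n
      have := key (n + (N + 1)) (by omega)
      calc (θ + l * (n + (N+1) : ℕ)) ^ (n + (N+1)) / (n + (N+1)).factorial
            * Real.exp (-θ - l * (n + (N+1) : ℕ))
          ≤ Real.exp (-θ) * ρ ^ (n + (N + 1)) := this
        _ = Real.exp (-θ) * ρ ^ (N + 1) * ρ ^ n := by rw [pow_add]; ring
    · exact hgeom
  exact (summable_nat_add_iff (N + 1)).mp hshift

theorem gpd_sum_split (θ l : ℝ) (hθ : 0 < θ) (hl0 : 0 ≤ l) (hl1 : l < 1) :
    (∑' n : ℕ, θ * (θ + n * l) ^ ((n : ℝ) - 1) / n.factorial * Real.exp (-θ - n * l)) =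
      (∑' n : ℕ, (θ + l * n) ^ n / n.factorial * Real.exp (-θ - l * n)) -
        l * ∑' n : ℕ, (θ + l + l * n) ^ n / n.factorial * Real.exp (-(θ + l) - l * n) := by
  set A := fun n : ℕ => (θ + l * n) ^ n / n.factorial * Real.exp (-θ - l * n) with hA_def
  set B := fun n : ℕ => (θ + l + l * n) ^ n / n.factorial * Real.exp (-(θ + l) - l * n) with hB_def
  set E := fun n : ℕ => n * l * (θ + n * l) ^ ((n : ℝ) - 1) / n.factorial
    * Real.exp (-θ - n * l) with hE_def
  have hA : Summable A := summable_S θ l hθ hl0 hl1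
  have hB : Summable B := summable_S (θ + l) l (by linarith) hl0 hl1
  have hEB : ∀ n : ℕ, E (n + 1) = l * B n := by
    intro n
    have hpos : (0 : ℝ) < θ + (n + 1 : ℕ) * l := by positivity
    have hrpow : (θ + (n + 1 : ℕ) * l) ^ (((n + 1 : ℕ) : ℝ) - 1)
        = (θ + (n + 1 : ℕ) * l) ^ (n : ℕ) := by
      rw [show (((n + 1 : ℕ) : ℝ) - 1) = ((n : ℕ) : ℝ) by push_cast; ring,
        Real.rpow_natCast]
    simp only [hE_def, hB_def, hrpow]
    have hfact : ((n + 1 : ℕ).factorial : ℝ) = (n + 1) * n.factorial := by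
      rw [Nat.factorial_succ]; push_cast; ring
    have hbase : (θ + (n + 1 : ℕ) * l) = θ + l + l * n := by push_cast; ring
    have hexp : (-θ - (n + 1 : ℕ) * l) = -(θ + l) - l * n := by push_cast; ring
    rw [hfact, hbase, hexp]
    have hn1 : ((n : ℝ) + 1) ≠ 0 := by positivity
    push_cast
    field_simp
  have hE : Summable E := by
    apply (summable_nat_add_iff 1).mp
    refine Summable.congr (hB.mul_left l) ?_
    intro n
    exact (hEB n).symm
  have hPAE : ∀ n : ℕ,
      θ * (θ + n * l) ^ ((n : ℝ) - 1) / n.factorial * Real.exp (-θ - n * l) = A n - E n := by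
    intro n
    cases n with
    | zero =>
        simp only [hA_def, hE_def]
        norm_num
        rw [Real.rpow_neg_one, mul_inv_cancel₀ hθ.ne']
    | succ n =>
        have hrpow : (θ + (n + 1 : ℕ) * l) ^ (((n + 1 : ℕ) : ℝ) - 1)
            = (θ + (n + 1 : ℕ) * l) ^ (n : ℕ) := by
          rw [show (((n + 1 : ℕ) : ℝ) - 1) = ((n : ℕ) : ℝ) by push_cast; ring,
            Real.rpow_natCast]
        simp only [hA_def, hE_def, hrpow]
        have hbase : (θ + l * (n + 1 : ℕ)) = θ + (n + 1 : ℕ) * l := by ring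
        have hexp : (-θ - l * (n + 1 : ℕ)) = -θ - (n + 1 : ℕ) * l := by ring
        rw [hbase, hexp, pow_succ]
        have hfact : (0 : ℝ) < (n + 1 : ℕ).factorial := by positivity
        field_simp
        ring
  rw [tsum_congr hPAE, Summable.tsum_sub hA hE, Summable.tsum_eq_zero_add hE,
    show E 0 = 0 by simp [hE_def]]
  rw [tsum_congr hEB, tsum_mul_left]
  ring
end
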